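/- arXiv:2511.23086 — 4 statements merged into one kernel-verified Lean document; each statement's English description precedes it below -/
import Mathlib

section
/- The function λ ↦ Q̃(x,λ) is decreasing for every fixed x ∈ [0,1], where Q̃(x,λ) = (((1+x)/2)^λ - ((1-x)/2)^λ)/λ for λ ≠ 0 and Q̃(x,0) = ln((1+x)/(1-x)). -/
/-- Quantile function of `|X|` for a Tukey Lambda random variable `X`. -/
noncomputable def tukeyQabs (x lam : ℝ) : ℝ :=
  if lam = 0 then Real.log ((1 + x) / (1 - x))
  else (((1 + x) / 2) ^ lam - ((1 - x) / 2) ^ lam) / lam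

lemma integral_exp_mul_aux (lam α β : ℝ) (hlam : lam ≠ 0) :
    ∫ t in β..α, Real.exp (lam * t) =
      (Real.exp (lam * α) - Real.exp (lam * β)) / lam := by
  have h : ∀ t ∈ Set.uIcc β α,
      HasDerivAt (fun t => Real.exp (lam * t) / lam) (Real.exp (lam * t)) t := by
    intro t _
    have h1 : HasDerivAt (fun t : ℝ => lam * t) lam t := by
      simpa using (hasDerivAt_id t).const_mul lam
    have := (h1.exp).div_const lam
    simpa [mul_div_assoc, mul_div_cancel_right₀ _ hlam] using this
  have hint : IntervalIntegrable (fun t => Real.exp (lam * t)) MeasureTheory.volume β α :=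
    (Real.continuous_exp.comp (continuous_const.mul continuous_id)).intervalIntegrable _ _
  rw [intervalIntegral.integral_eq_sub_of_hasDerivAt h hint]
  ring

/-- For each fixed `x ∈ [0,1)`, `λ ↦ Q̃(x,λ)` is decreasing. -/
theorem tukeyQabs_antitone (x : ℝ) (hx0 : 0 ≤ x) (hx1 : x < 1) :
    Antitone (fun lam : ℝ => tukeyQabs x lam) := by
  set a : ℝ := (1 + x) / 2 with ha_def
  set b : ℝ := (1 - x) / 2 with hb_def
  have ha0 : 0 < a := by unfold a; linarith
  have hb0 : 0 < b := by unfold b; linarith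
  have ha1 : a < 1 := by unfold a; linarith
  have hba : b ≤ a := by unfold a b; linarith
  have hloga : Real.log a ≤ 0 := Real.log_nonpos ha0.le ha1.le
  have hlogba : Real.log b ≤ Real.log a := Real.log_le_log hb0 hba
  have key : ∀ lam : ℝ,
      tukeyQabs x lam = ∫ t in Real.log b..Real.log a, Real.exp (lam * t) := by
    intro lam
    rcases eq_or_ne lam 0 with h0 | h0
    · subst h0
      simp only [tukeyQabs, if_pos rfl, if_true, zero_mul, Real.exp_zero,
        intervalIntegral.integral_const, smul_eq_mul, mul_one]
      have hx' : (1 : ℝ) - x ≠ 0 := by linarith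
      have hab : (1 + x) / (1 - x) = a / b := by
        rw [ha_def, hb_def]; field_simp
      rw [hab, Real.log_div ha0.ne' hb0.ne']
    · rw [tukeyQabs, if_neg h0, integral_exp_mul_aux lam _ _ h0]
      rw [Real.rpow_def_of_pos ha0, Real.rpow_def_of_pos hb0, mul_comm lam, mul_comm lam]
  intro l1 l2 h
  simp only [key]
  apply intervalIntegral.integral_mono_on hlogba
  · exact (Real.continuous_exp.comp (continuous_const.mul continuous_id)).intervalIntegrable _ _
  · exact (Real.continuous_exp.comp (continuous_const.mul continuous_id)).intervalIntegrable _ _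
  · intro t ht
    apply Real.exp_le_exp.mpr
    exact mul_le_mul_of_nonpos_right h (le_trans ht.2 hloga)
end

section
/- The function λ ↦ Q̃(x,λ) is convex on ℝ for every fixed x ∈ [0,1), where Q̃(x,λ) = (((1+x)/2)^λ - ((1-x)/2)^λ)/λ for λ ≠ 0 and Q̃(x,0) = ln((1+x)/(1-x)). -/
/-!
Writing `a = (1 + x) / 2` and `b = (1 - x) / 2`, for every `λ` (including `λ = 0`)
`Q̃(x, λ) = ∫ t in log b..log a, exp (λ t)`. Each integrand `λ ↦ exp (λ t)` is convex, and for
`x ≥ 0` we have `log b ≤ log a`, so the integral against a positive measure is convex in `λ`.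
-/

open Real MeasureTheory

theorem convexOn_integral_of_convexOn {E α : Type*} [AddCommGroup E] [Module ℝ E]
    [MeasurableSpace α] {μ : Measure α} {s : Set E} {f : E → α → ℝ} (hs : Convex ℝ s)
    (hf : ∀ t, ConvexOn ℝ s (f · t)) (hint : ∀ p ∈ s, Integrable (f p) μ) :
    ConvexOn ℝ s (fun p => ∫ t, f p t ∂μ) := by
  refine ⟨hs, fun p hp q hq w v hw hv hwv => ?_⟩
  have hwp : Integrable (fun t => w • f p t) μ := (hint p hp).smul w
  have hvq : Integrable (fun t => v • f q t) μ := (hint q hq).smul v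
  calc ∫ t, f (w • p + v • q) t ∂μ
      ≤ ∫ t, (w • f p t + v • f q t) ∂μ :=
        integral_mono (hint _ (hs hp hq hw hv hwv)) (hwp.add hvq) fun t => (hf t).2 hp hq hw hv hwv
    _ = w • ∫ t, f p t ∂μ + v • ∫ t, f q t ∂μ := by
        rw [integral_add hwp hvq, integral_smul, integral_smul]

theorem convexOn_intervalIntegral_exp_mul {a b : ℝ} (hab : a ≤ b) :
    ConvexOn ℝ Set.univ (fun lam => ∫ t in a..b, exp (lam * t)) := by
  simp only [intervalIntegral.integral_of_le hab]
  exact convexOn_integral_of_convexOn convex_univ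
    (fun t => convexOn_exp.comp_linearMap (LinearMap.mulRight ℝ t))
    fun lam _ => (continuous_exp.comp (continuous_const_mul lam)).integrableOn_Ioc

theorem intervalIntegral_exp_mul_log {a b c : ℝ} (ha : 0 < a) (hb : 0 < b) (hc : c ≠ 0) :
    ∫ t in log b..log a, exp (c * t) = (a ^ c - b ^ c) / c := by
  rw [intervalIntegral.integral_comp_mul_left (fun t => exp t) hc, integral_exp, smul_eq_mul,
    rpow_def_of_pos ha, rpow_def_of_pos hb]
  ring_nf

theorem tukeyQabs_eq_intervalIntegral {x : ℝ} (hx0 : -1 < x) (hx1 : x < 1) (lam : ℝ) :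
    tukeyQabs x lam = ∫ t in log ((1 - x) / 2)..log ((1 + x) / 2), exp (lam * t) := by
  have ha : 0 < (1 + x) / 2 := by linarith
  have hb : 0 < (1 - x) / 2 := by linarith
  rcases eq_or_ne lam 0 with rfl | hlam
  · rw [tukeyQabs, if_pos rfl]
    simp only [zero_mul, exp_zero, intervalIntegral.integral_const, smul_eq_mul, mul_one]
    rw [← log_div ha.ne' hb.ne', div_div_div_cancel_right₀ two_ne_zero]
  · rw [tukeyQabs, if_neg hlam, intervalIntegral_exp_mul_log ha hb hlam]

/-- For each fixed `x ∈ [0,1)`, `λ ↦ Q̃(x,λ)` is convex on `ℝ`. -/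
theorem tukeyQabs_convexOn (x : ℝ) (hx0 : 0 ≤ x) (hx1 : x < 1) :
    ConvexOn ℝ Set.univ (fun lam : ℝ => tukeyQabs x lam) := by
  have hlog : log ((1 - x) / 2) ≤ log ((1 + x) / 2) :=
    log_le_log (by linarith) (by linarith)
  simp only [tukeyQabs_eq_intervalIntegral (by linarith) hx1]
  exact convexOn_intervalIntegral_exp_mul hlog
end

section
/- Let 1/2 ≤ p < 1 and q = 1 - p. Then for λ ≥ 0, λ² p^λ (ln p)² - 2λ p^λ ln p + 2p^λ ≥ λ² q^λ (ln q)² - 2λ q^λ ln q + 2q^λ, and the reverse inequality holds for λ ≤ 0. -/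
/-! With `u = λ log x` the expression `λ² x^λ (log x)² − 2λ x^λ log x + 2x^λ` equals
`e^u (u² − 2u + 2)`, which is increasing in `u` because its derivative is `e^u u² ≥ 0`.
Since `q ≤ p`, the sign of `λ` decides whether `λ log q ≤ λ log p` or the reverse. -/

open Real

noncomputable def expMulQuadratic (u : ℝ) : ℝ := exp u * (u ^ 2 - 2 * u + 2)

theorem hasDerivAt_expMulQuadratic (u : ℝ) :
    HasDerivAt expMulQuadratic (exp u * u ^ 2) u := by
  have hquad : HasDerivAt (fun u : ℝ => u ^ 2 - 2 * u + 2) (2 * u - 2) u := by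
    simpa [mul_comm] using
      ((hasDerivAt_pow 2 u).sub ((hasDerivAt_id u).const_mul 2)).add_const 2
  exact ((hasDerivAt_exp u).mul hquad).congr_deriv (by ring)

theorem monotone_expMulQuadratic : Monotone expMulQuadratic :=
  monotone_of_deriv_nonneg (fun u => (hasDerivAt_expMulQuadratic u).differentiableAt)
    fun u => (hasDerivAt_expMulQuadratic u).deriv ▸ by positivity

noncomputable def tukeyTerm (lam x : ℝ) : ℝ :=
  lam ^ 2 * x ^ lam * log x ^ 2 - 2 * lam * x ^ lam * log x + 2 * x ^ lam

theorem tukeyTerm_eq_expMulQuadratic (lam : ℝ) {x : ℝ} (hx : 0 < x) :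
    tukeyTerm lam x = expMulQuadratic (lam * log x) := by
  rw [tukeyTerm, expMulQuadratic, rpow_def_of_pos hx, mul_comm (log x) lam]
  ring

theorem monotoneOn_tukeyTerm {lam : ℝ} (hlam : 0 ≤ lam) :
    MonotoneOn (tukeyTerm lam) (Set.Ioi 0) :=
  fun x hx y hy hxy => by
    rw [tukeyTerm_eq_expMulQuadratic lam hx, tukeyTerm_eq_expMulQuadratic lam hy]
    exact monotone_expMulQuadratic (mul_le_mul_of_nonneg_left (log_le_log hx hxy) hlam)

theorem antitoneOn_tukeyTerm {lam : ℝ} (hlam : lam ≤ 0) :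
    AntitoneOn (tukeyTerm lam) (Set.Ioi 0) :=
  fun x hx y hy hxy => by
    rw [tukeyTerm_eq_expMulQuadratic lam hx, tukeyTerm_eq_expMulQuadratic lam hy]
    exact monotone_expMulQuadratic (mul_le_mul_of_nonpos_left (log_le_log hx hxy) hlam)

/-- Convexity inequality for the Tukey Lambda quantile function: with
`1/2 ≤ p < 1`, `q = 1 - p`, for `λ ≥ 0` one has
`λ²p^λ(ln p)² − 2λp^λ ln p + 2p^λ ≥ λ²q^λ(ln q)² − 2λq^λ ln q + 2q^λ`,
and the reverse inequality holds for `λ ≤ 0`. -/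
theorem tukey_convexity_ineq (p q lam : ℝ) (hp : 1 / 2 ≤ p) (hp1 : p < 1)
    (hq : q = 1 - p) :
    (0 ≤ lam →
      lam ^ 2 * q ^ lam * Real.log q ^ 2 - 2 * lam * q ^ lam * Real.log q + 2 * q ^ lam ≤
      lam ^ 2 * p ^ lam * Real.log p ^ 2 - 2 * lam * p ^ lam * Real.log p + 2 * p ^ lam) ∧
    (lam ≤ 0 →
      lam ^ 2 * p ^ lam * Real.log p ^ 2 - 2 * lam * p ^ lam * Real.log p + 2 * p ^ lam ≤
      lam ^ 2 * q ^ lam * Real.log q ^ 2 - 2 * lam * q ^ lam * Real.log q + 2 * q ^ lam) := by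
  have hq0 : q ∈ Set.Ioi (0 : ℝ) := by rw [hq, Set.mem_Ioi]; linarith
  have hp0 : p ∈ Set.Ioi (0 : ℝ) := by rw [Set.mem_Ioi]; linarith
  have hqp : q ≤ p := by rw [hq]; linarith
  exact ⟨fun hlam => monotoneOn_tukeyTerm hlam hq0 hp0 hqp,
    fun hlam => antitoneOn_tukeyTerm hlam hq0 hp0 hqp⟩
end

section
/- For 0 < u < 1 with p = (1+u)/2, q = (1-u)/2, and any λ ∈ ℝ, the partial derivative ∂Q̃/∂λ(u,λ) satisfies ∂Q̃/∂λ(u,λ) ≤ (ln p) · Q̃(u,λ), where Q̃(u,λ) = (p^λ - q^λ)/λ for λ ≠ 0 and Q̃(u,0) = ln(p/q). -/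
/-! Writing `a = log p` and `b = log q`, the map `λ ↦ Q̃(u, λ)` is the difference quotient at `0`
of the entire function `F λ = e^{aλ} - e^{bλ}` (its value `a - b = ln (p/q)` at `λ = 0` is `F' 0`),
so it is analytic and in particular `C¹`. For `λ ≠ 0` a direct computation gives
`λ² (Q̃' - a Q̃) = e^{bλ} ((a - b) λ + 1 - e^{(a - b) λ}) ≤ 0`, and the case `λ = 0` follows by
continuity of both sides. -/

open Real Filter Topology Set

theorem AnalyticOnNhd.dslope {𝕜 E : Type*} [NontriviallyNormedField 𝕜] [NormedAddCommGroup E]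
    [NormedSpace 𝕜 E] {f : 𝕜 → E} {s : Set 𝕜} (hf : AnalyticOnNhd 𝕜 f s) (a : 𝕜) :
    AnalyticOnNhd 𝕜 (dslope f a) s := by
  intro b hb
  rcases eq_or_ne b a with rfl | hba
  · obtain ⟨p, hp⟩ := hf b hb
    exact hp.has_fpower_series_dslope_fslope.analyticAt
  · refine AnalyticAt.congr ?_ (dslope_eventuallyEq_slope_of_ne f hba).symm
    have hsub : AnalyticAt 𝕜 (fun x => x - a) b := by fun_prop
    exact (hsub.inv (sub_ne_zero.2 hba)).smul ((hf b hb).sub analyticAt_const)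

section ExpSlope

variable (a b : ℝ)

lemma hasDerivAt_exp_mul_sub_exp_mul (l : ℝ) :
    HasDerivAt (fun l => exp (a * l) - exp (b * l)) (a * exp (a * l) - b * exp (b * l)) l := by
  have hexp (c : ℝ) : HasDerivAt (fun l => exp (c * l)) (c * exp (c * l)) l := by
    simpa [mul_comm] using ((hasDerivAt_id l).const_mul c).exp
  exact (hexp a).sub (hexp b)

lemma dslope_exp_mul_sub_exp_mul_of_ne {l : ℝ} (hl : l ≠ 0) :
    dslope (fun l => exp (a * l) - exp (b * l)) 0 l = (exp (a * l) - exp (b * l)) / l := by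
  simp [dslope_of_ne _ hl, slope_def_field]

lemma contDiff_dslope_exp_mul_sub_exp_mul :
    ContDiff ℝ 1 (dslope (fun l => exp (a * l) - exp (b * l)) 0) := by
  have hf : AnalyticOnNhd ℝ (fun l => exp (a * l) - exp (b * l)) univ := fun _ _ => by fun_prop
  exact (hf.dslope 0).contDiff

lemma deriv_dslope_exp_mul_sub_exp_mul_le_of_ne {l : ℝ} (hl : l ≠ 0) :
    deriv (dslope (fun l => exp (a * l) - exp (b * l)) 0) l ≤
      a * dslope (fun l => exp (a * l) - exp (b * l)) 0 l := by
  set A := exp (a * l)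
  set B := exp (b * l)
  have hslope : dslope (fun l => exp (a * l) - exp (b * l)) 0 =ᶠ[𝓝 l]
      fun l => (exp (a * l) - exp (b * l)) / l :=
    (eventually_ne_nhds hl).mono fun _ => dslope_exp_mul_sub_exp_mul_of_ne a b
  have hderiv : HasDerivAt (dslope (fun l => exp (a * l) - exp (b * l)) 0)
      (((a * A - b * B) * l - (A - B) * 1) / l ^ 2) l :=
    ((hasDerivAt_exp_mul_sub_exp_mul a b l).div (hasDerivAt_id l) hl).congr_of_eventuallyEq hslope
  have hAB : B * ((a - b) * l) ≤ A - B := by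
    have hA : A = B * exp ((a - b) * l) := by simp only [A, B, ← exp_add]; ring_nf
    nlinarith [add_one_le_exp ((a - b) * l), exp_pos (b * l)]
  calc deriv (dslope (fun l => exp (a * l) - exp (b * l)) 0) l
      = a * ((A - B) / l) + (B * ((a - b) * l) - (A - B)) / l ^ 2 := by
        rw [hderiv.deriv]; field_simp; ring
    _ ≤ a * ((A - B) / l) :=
        add_le_of_nonpos_right (div_nonpos_of_nonpos_of_nonneg (by linarith) (sq_nonneg l))
    _ = a * dslope (fun l => exp (a * l) - exp (b * l)) 0 l := by
        rw [dslope_exp_mul_sub_exp_mul_of_ne a b hl]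

lemma deriv_dslope_exp_mul_sub_exp_mul_le (l : ℝ) :
    deriv (dslope (fun l => exp (a * l) - exp (b * l)) 0) l ≤
      a * dslope (fun l => exp (a * l) - exp (b * l)) 0 l := by
  have hC1 := contDiff_dslope_exp_mul_sub_exp_mul a b
  exact le_on_closure (fun _ hx => deriv_dslope_exp_mul_sub_exp_mul_le_of_ne a b hx)
    (hC1.continuous_deriv le_rfl).continuousOn (continuous_const.mul hC1.continuous).continuousOn
    (dense_compl_singleton 0 l)

end ExpSlope

lemma tukeyQabs_eq_dslope {u : ℝ} (hu₀ : -1 < u) (hu₁ : u < 1) :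
    tukeyQabs u = dslope (fun l => exp (log ((1 + u) / 2) * l) - exp (log ((1 - u) / 2) * l)) 0 := by
  have hp : 0 < (1 + u) / 2 := by linarith
  have hq : 0 < (1 - u) / 2 := by linarith
  funext l
  rcases eq_or_ne l 0 with rfl | hl
  · have hpq : (1 + u) / (1 - u) = ((1 + u) / 2) / ((1 - u) / 2) := by
      field_simp
    rw [dslope_same, (hasDerivAt_exp_mul_sub_exp_mul _ _ 0).deriv, tukeyQabs, if_pos rfl, hpq,
      log_div hp.ne' hq.ne']
    simp
  · rw [dslope_exp_mul_sub_exp_mul_of_ne _ _ hl, tukeyQabs, if_neg hl, rpow_def_of_pos hp,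
      rpow_def_of_pos hq]

/-- For `0 < u < 1`, `p = (1+u)/2`, and any `λ`,
`∂Q̃/∂λ(u,λ) ≤ (ln p)·Q̃(u,λ)`. -/
theorem tukeyQabs_deriv_bound (u lam : ℝ) (hu0 : 0 < u) (hu1 : u < 1) :
    deriv (fun l : ℝ => tukeyQabs u l) lam ≤
      Real.log ((1 + u) / 2) * tukeyQabs u lam := by
  rw [tukeyQabs_eq_dslope (by linarith) hu1]
  exact deriv_dslope_exp_mul_sub_exp_mul_le _ _ lam
end
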